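/- In K-class classification with symmetric label noise of rate η < 1 − 1/K, any global maximizer θ* of the noisy objective J^η is also a global maximizer of the clean objective J. That is, EPG is noise-tolerant under symmetric label noise when η < (K−1)/K. -/
import Mathlib


/-- Noise tolerance of EPG: if `η < 1 - 1/K`, any global maximizer of the noisy
objective `Jη(θ) = (1 - Kη/(K-1)) J(θ) + η/(K-1)` is also a global maximizer of
the clean objective `J`. -/
theorem stmt2 {Θ : Type*} (K : ℕ) (hK : 2 ≤ K)
    (η : ℝ) (hη0 : 0 ≤ η) (hη : η < 1 - 1 / (K:ℝ))
    (J Jη : Θ → ℝ)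
    (hrel : ∀ θ, Jη θ = (1 - (K:ℝ) * η / ((K:ℝ) - 1)) * J θ + η / ((K:ℝ) - 1))
    (θs : Θ) (hmax : ∀ θ, Jη θ ≤ Jη θs) :
    ∀ θ, J θ ≤ J θs := by
  have hK2 : (2:ℝ) ≤ (K:ℝ) := by exact_mod_cast hK
  have hK1 : (1:ℝ) < (K:ℝ) := by linarith
  have hKpos : (0:ℝ) < (K:ℝ) := by linarith
  have hc : 0 < 1 - (K:ℝ) * η / ((K:ℝ) - 1) := by
    rw [sub_pos, div_lt_one (by linarith)]
    have : η * (K:ℝ) < (1 - 1/(K:ℝ)) * (K:ℝ) := by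
      apply mul_lt_mul_of_pos_right hη hKpos
    calc (K:ℝ) * η = η * (K:ℝ) := by ring
      _ < (1 - 1/(K:ℝ)) * (K:ℝ) := this
      _ = (K:ℝ) - 1 := by field_simp
  intro θ
  have h := hmax θ
  rw [hrel θ, hrel θs] at h
  nlinarith [h, hc]
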